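/- arXiv:math-ph/0512039 — 4 statements merged into one kernel-verified Lean document; each statement's English description precedes it below -/
import Mathlib

section
/- Let j be a unital *-homomorphism of B into B(K), L : H → K bounded with adjoint L†, k(X) = j(X)L − LX, k*(X) = L†j(X) − XL†, D = D† ∈ B(H), and H₀ = H₀† ∈ B(H). Define l(X) = ½(L†k(X) + k*(X)L + [X,D]) + i[H₀,X]. Then l satisfies the cocycle identity l(X†Z) = X† l(Z) + l(X†) Z + k*(X†) k(Z) for all X, Z ∈ B. -/
open ContinuousLinearMap

/-- With `k(X) = j(X)L − LX`, `k*(X) = L†j(X) − XL†`, `D = D†`, `H₀ = H₀†`, the map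
`l(X) = ½(L†k(X) + k*(X)L + [X,D]) + i[H₀,X]` satisfies the cocycle identity
`l(X†Z) = X† l(Z) + l(X†) Z + k*(X†) k(Z)`. -/
theorem stmt10 {H K : Type*} [NormedAddCommGroup H] [InnerProductSpace ℂ H] [CompleteSpace H]
    [NormedAddCommGroup K] [InnerProductSpace ℂ K] [CompleteSpace K]
    (j : (H →L[ℂ] H) → (K →L[ℂ] K))
    (hjm : ∀ X Z, j (X * Z) = j X * j Z) (hj1 : j 1 = 1)
    (hjs : ∀ X, j (star X) = star (j X))
    (L : H →L[ℂ] K) (D H₀ : H →L[ℂ] H)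
    (hD : IsSelfAdjoint D) (hH₀ : IsSelfAdjoint H₀)
    (k : (H →L[ℂ] H) → (H →L[ℂ] K)) (hk : ∀ X, k X = (j X) ∘L L - L ∘L X)
    (kst : (H →L[ℂ] H) → (K →L[ℂ] H))
    (hkst : ∀ X, kst X = (adjoint L) ∘L (j X) - X ∘L (adjoint L))
    (l : (H →L[ℂ] H) → (H →L[ℂ] H))
    (hl : ∀ X, l X = (1 / 2 : ℂ) •
        ((adjoint L) ∘L (k X) + (kst X) ∘L L + (X * D - D * X))
      + Complex.I • (H₀ * X - X * H₀)) :
    ∀ X Z : H →L[ℂ] H,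
      l (star X * Z) = star X * l Z + l (star X) * Z + (kst (star X)) ∘L (k Z) := by
  intro X Z
  simp only [hl, hk, hkst]
  simp only [hjm]
  simp only [mul_def]
  simp only [comp_sub, sub_comp, comp_add, add_comp, comp_smul, smul_comp, comp_assoc]
  module
end

section
/- Let j : B → B(K) be a unital *-homomorphism, k a (j,i)-derivation with adjoint k*, and l : B → B satisfying l(X†Z) = X† l(Z) + l(X†) Z + k*(X†) k(Z). Define the block map ȷ(X) on H ⊕ K ⊕ H by the matrix [[X, k*(X), l(X)],[0, j(X), k(X)],[0,0,X]]. Then ȷ is multiplicative: ȷ(XZ) = ȷ(X) ȷ(Z) and ȷ(I) = I. -/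
open ContinuousLinearMap

/-- If `j` is a unital *-homomorphism into `B(K)`, `k` a `(j,i)`-derivation with adjoint
map `k*(X) = k(X†)†`, and `l` satisfies `l(X†Z) = X†l(Z) + l(X†)Z + k*(X†)k(Z)`, then the
block map `ȷ(X) = [[X, k*(X), l(X)],[0, j(X), k(X)],[0, 0, X]]` on `H ⊕ K ⊕ H` is
multiplicative and unital: `ȷ(XZ) = ȷ(X)ȷ(Z)` and `ȷ(I) = I`. -/
theorem stmt12 {H K : Type*} [NormedAddCommGroup H] [InnerProductSpace ℂ H] [CompleteSpace H]
    [NormedAddCommGroup K] [InnerProductSpace ℂ K] [CompleteSpace K]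
    (j : (H →L[ℂ] H) → (K →L[ℂ] K))
    (hjm : ∀ X Z, j (X * Z) = j X * j Z) (hj1 : j 1 = 1)
    (hjs : ∀ X, j (star X) = star (j X))
    (k : (H →L[ℂ] H) → (H →L[ℂ] K))
    (hk : ∀ X Z, k (X * Z) = (j X) ∘L (k Z) + (k X) ∘L Z)
    (kst : (H →L[ℂ] H) → (K →L[ℂ] H))
    (hkst : ∀ X, kst X = adjoint (k (star X)))
    (l : (H →L[ℂ] H) → (H →L[ℂ] H))
    (hl : ∀ X Z, l (star X * Z) =
      star X * l Z + l (star X) * Z + (kst (star X)) ∘L (k Z))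
    (J : (H →L[ℂ] H) → ((H × K × H) →L[ℂ] (H × K × H)))
    (hJ : ∀ (X : H →L[ℂ] H) (x : H) (y : K) (z : H),
      J X (x, y, z) = (X x + kst X y + l X z, j X y + k X z, X z)) :
    (∀ X Z, J (X * Z) = (J X) ∘L (J Z)) ∧ J 1 = ContinuousLinearMap.id ℂ (H × K × H) := by
  -- key auxiliary identities
  have hkst' : ∀ X Z, kst (X * Z) = kst X ∘L j Z + X ∘L kst Z := by
    intro X Z
    have h1 : star (X * Z) = star Z * star X := star_mul X Z
    rw [hkst, h1, hk]
    rw [map_add, adjoint_comp, adjoint_comp, ← hkst, ← star_eq_adjoint (j (star Z)),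
      ← hjs, star_star, ← star_eq_adjoint (star X), star_star, ← hkst]
  have hl' : ∀ X Z, l (X * Z) = X * l Z + l X * Z + kst X ∘L k Z := by
    intro X Z
    have := hl (star X) Z
    rwa [star_star] at this
  have hk1 : k 1 = 0 := by
    have := hk 1 1
    rw [mul_one, hj1] at this
    have h2 : k 1 = k 1 + k 1 := by
      conv_lhs => rw [this]
      congr 1 <;> ext v <;> simp
    have := add_left_cancel (a := k 1) (b := 0) (c := k 1) (by rw [add_zero, ← h2])
    exact this.symm
  have hkst1 : kst 1 = 0 := by
    rw [hkst, star_one, hk1, map_zero]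
  have hl1 : l 1 = 0 := by
    have := hl' 1 1
    rw [mul_one, one_mul, mul_one, hkst1] at this
    have h2 : l 1 = l 1 + l 1 := by
      convert this using 1
      ext v; simp
    have := add_left_cancel (a := l 1) (b := 0) (c := l 1) (by rw [add_zero, ← h2])
    exact this.symm
  constructor
  · intro X Z
    refine ContinuousLinearMap.ext fun v => ?_
    obtain ⟨x, y, z⟩ := v
    simp only [comp_apply, hJ, hk, hkst', hl', mul_apply', add_apply, map_add]
    refine Prod.ext ?_ (Prod.ext ?_ rfl)
    · simp only [comp_apply, hjm, ContinuousLinearMap.mul_apply]; abel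
    · simp only [comp_apply, hjm, ContinuousLinearMap.mul_apply]; abel
  · refine ContinuousLinearMap.ext fun v => ?_
    obtain ⟨x, y, z⟩ := v
    rw [hJ, hk1, hkst1, hl1, hj1]
    simp
end

section
/- In the setting of the previous statement, suppose additionally l*(X) = l(X) + [D,X] where D = D† and l*(X) = l(X†)†. Then ȷ is a ♭-representation with respect to the metric G = [[0,0,I],[0,I,0],[I,0,D]]: ȷ(X†) = G^{-1} ȷ(X)† G for all X ∈ B. -/
open ContinuousLinearMap

variable {H K : Type*} [NormedAddCommGroup H] [InnerProductSpace ℂ H] [CompleteSpace H]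
  [NormedAddCommGroup K] [InnerProductSpace ℂ K] [CompleteSpace K]

/-- The Hilbert space `H ⊕ K ⊕ H`. -/
abbrev TripleSum (H K : Type*) [NormedAddCommGroup H] [InnerProductSpace ℂ H]
    [NormedAddCommGroup K] [InnerProductSpace ℂ K] : Type _ :=
  WithLp 2 (H × WithLp 2 (K × H))

/-- The triple `(x, y, z) ∈ H ⊕ K ⊕ H`. -/
noncomputable def mk3 (x : H) (y : K) (z : H) : TripleSum H K :=
  (WithLp.equiv 2 _).symm (x, (WithLp.equiv 2 _).symm (y, z))

/-! With respect to the indefinite form `[u, v] = ⟪G u, v⟫`, the identity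
`ȷ(X†) = G⁻¹ ȷ(X)† G` says that `ȷ(X†)` is the `[·,·]`-adjoint of `ȷ(X)`. Expanding
`[ȷ(X†) u, v] = [u, ȷ(X) v]` blockwise, every term pairs off by `j(X†) = j(X)†` and
`k*(X) = k(X†)†`, except the corner `l`, which matches exactly because
`l(X†) = l(X)† + X†D - DX†`. -/

omit [CompleteSpace H] [CompleteSpace K] in
lemma exists_mk3 (w : TripleSum H K) : ∃ x y z, w = mk3 x y z :=
  ⟨w.ofLp.1, w.ofLp.2.ofLp.1, w.ofLp.2.ofLp.2, rfl⟩

omit [CompleteSpace H] [CompleteSpace K] in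
lemma inner_mk3 (x : H) (y : K) (z : H) (x' : H) (y' : K) (z' : H) :
    inner ℂ (mk3 x y z) (mk3 x' y' z') = inner ℂ x x' + inner ℂ y y' + inner ℂ z z' := by
  simp only [mk3, WithLp.prod_inner_apply]
  exact (add_assoc _ _ _).symm

lemma eq_star_add_mul_sub_mul_of_star_eq {R : Type*} [Ring R] [StarRing R] {a b d x : R}
    (hd : IsSelfAdjoint d) (h : star b = a + (d * x - x * d)) :
    b = star a + star x * d - d * star x := by
  rw [← star_star b, h, star_add, star_sub, star_mul, star_mul, hd.star_eq]
  abel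

lemma eq_comp_adjoint_comp_of_inner {E : Type*} [NormedAddCommGroup E] [InnerProductSpace ℂ E]
    [CompleteSpace E] {A B G Ginv : E →L[ℂ] E} (hGinv : ∀ w, Ginv (G w) = w)
    (h : ∀ u v, inner ℂ (G (B u)) v = inner ℂ (G u) (A v)) :
    B = Ginv ∘L adjoint A ∘L G := by
  have hGB : G ∘L B = adjoint A ∘L G :=
    ext fun u => ext_inner_right ℂ fun v => by
      rw [comp_apply, comp_apply, adjoint_inner_left, h]
  ext u
  rw [comp_apply, comp_apply, ← comp_apply (adjoint A) G, ← hGB, comp_apply, hGinv]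

theorem stmt13_general
    (j : (H →L[ℂ] H) → (K →L[ℂ] K))
    (hjs : ∀ X, j (star X) = star (j X))
    (k : (H →L[ℂ] H) → (H →L[ℂ] K))
    (kst : (H →L[ℂ] H) → (K →L[ℂ] H))
    (hkst : ∀ X, kst X = adjoint (k (star X)))
    (l : (H →L[ℂ] H) → (H →L[ℂ] H))
    (D : H →L[ℂ] H) (hD : IsSelfAdjoint D)
    (hlst : ∀ X, star (l (star X)) = l X + (D * X - X * D))
    (J : (H →L[ℂ] H) → (TripleSum H K →L[ℂ] TripleSum H K))
    (hJ : ∀ (X : H →L[ℂ] H) (x : H) (y : K) (z : H),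
      J X (mk3 x y z) = mk3 (X x + kst X y + l X z) (j X y + k X z) (X z))
    (G Ginv : TripleSum H K →L[ℂ] TripleSum H K)
    (hG : ∀ (x : H) (y : K) (z : H), G (mk3 x y z) = mk3 z y (x + D z))
    (hGinv : ∀ (x : H) (y : K) (z : H), Ginv (mk3 x y z) = mk3 (-(D x) + z) y x) :
    ∀ X : H →L[ℂ] H, J (star X) = Ginv ∘L (adjoint (J X)) ∘L G := by
  intro X
  have hGinvG : ∀ w, Ginv (G w) = w := by
    intro w
    obtain ⟨x, y, z, rfl⟩ := exists_mk3 w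
    rw [hG, hGinv, add_comm x, neg_add_cancel_left]
  refine eq_comp_adjoint_comp_of_inner hGinvG fun u v => ?_
  obtain ⟨x, y, z, rfl⟩ := exists_mk3 u
  obtain ⟨x', y', z', rfl⟩ := exists_mk3 v
  have hl : l (star X) = star (l X) + star X * D - D * star X :=
    eq_star_add_mul_sub_mul_of_star_eq hD (hlst X)
  have hkst_star : kst (star X) = adjoint (k X) := by rw [hkst, star_star]
  have hk_star : k (star X) = adjoint (kst X) := by rw [hkst, adjoint_adjoint]
  rw [hJ, hG, hG, hJ, inner_mk3, inner_mk3, hjs, hkst_star, hk_star, hl]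
  simp only [star_eq_adjoint, add_apply, sub_apply, mul_apply_eq_comp, inner_add_left,
    inner_add_right, inner_sub_left, adjoint_inner_left]
  ring

/-- If moreover `l*(X) = l(X) + [D,X]` with `D = D†`, then the block map
`ȷ(X) = [[X, k*(X), l(X)],[0, j(X), k(X)],[0,0,X]]` is a `♭`-representation with respect
to the metric `G = [[0,0,I],[0,I,0],[I,0,D]]`: `ȷ(X†) = G⁻¹ ȷ(X)† G`. -/
theorem stmt13
    (j : (H →L[ℂ] H) → (K →L[ℂ] K))
    (hjm : ∀ X Z, j (X * Z) = j X * j Z) (hj1 : j 1 = 1)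
    (hjs : ∀ X, j (star X) = star (j X))
    (k : (H →L[ℂ] H) → (H →L[ℂ] K))
    (hk : ∀ X Z, k (X * Z) = (j X) ∘L (k Z) + (k X) ∘L Z)
    (kst : (H →L[ℂ] H) → (K →L[ℂ] H))
    (hkst : ∀ X, kst X = adjoint (k (star X)))
    (l : (H →L[ℂ] H) → (H →L[ℂ] H))
    (hl : ∀ X Z, l (star X * Z) =
      star X * l Z + l (star X) * Z + (kst (star X)) ∘L (k Z))
    (D : H →L[ℂ] H) (hD : IsSelfAdjoint D)
    (hlst : ∀ X, star (l (star X)) = l X + (D * X - X * D))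
    (J : (H →L[ℂ] H) → (TripleSum H K →L[ℂ] TripleSum H K))
    (hJ : ∀ (X : H →L[ℂ] H) (x : H) (y : K) (z : H),
      J X (mk3 x y z) = mk3 (X x + kst X y + l X z) (j X y + k X z) (X z))
    (G Ginv : TripleSum H K →L[ℂ] TripleSum H K)
    (hG : ∀ (x : H) (y : K) (z : H), G (mk3 x y z) = mk3 z y (x + D z))
    (hGinv : ∀ (x : H) (y : K) (z : H), Ginv (mk3 x y z) = mk3 (-(D x) + z) y x) :
    ∀ X : H →L[ℂ] H, J (star X) = Ginv ∘L (adjoint (J X)) ∘L G :=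
  stmt13_general j hjs k kst hkst l D hD hlst J hJ G Ginv hG hGinv
end

section
/- Let λ : B → B(H ⊗ C^{d+1}) be linear and conditionally completely positive with respect to the representation ι(X) = X ⊕ 0 (i.e., Σ_k ι(X_k)η_k = 0 ⟹ Σ_{k,l}⟨η_k, λ(X_k†X_l)η_l⟩ ≥ 0), with λ(X†) = λ(X)^† in the appropriate sense. Then the dissipation kernel Δ(X,Z) := λ(X†Z) − ι(X)†λ(Z) − λ(X)†ι(Z) + ι(X)†λ(I)ι(Z) is a positive-definite kernel: Σ_{X,Z} ⟨η_X, Δ(X,Z) η_Z⟩ ≥ 0 for all finitely supported families (η_X) with η_X ∈ H ⊗ C^{d+1}. -/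
open ContinuousLinearMap
open scoped ComplexOrder

/-!
Append to the family `(X_k, η_k)` the pair `(I, -S)` with `S = ∑ ι(X_k) η_k`. Since `ι(I)` is the
projection onto the first summand, which contains the range of every `ι(X)`, the extended family
satisfies `∑ ι(X_k) η_k = 0`, so conditional complete positivity applies to it; expanding its
quadratic form with `λ(X†) = λ(X)†` gives exactly the quadratic form of `Δ` on the original family.
-/

instance piLpCompleteSpace {H : Type*} [NormedAddCommGroup H] [CompleteSpace H] (m : ℕ) :
    CompleteSpace (PiLp 2 (fun _ : Fin m => H)) :=
  inferInstance

section KernelSum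

variable {A E : Type*} [NormedAddCommGroup E] [InnerProductSpace ℂ E]

noncomputable def kernelSum (K : A → A → E →L[ℂ] E) {n : ℕ} (X : Fin n → A) (η : Fin n → E) : ℂ :=
  ∑ k, ∑ l, inner ℂ (η k) (K (X k) (X l) (η l))

lemma kernelSum_snoc (K : A → A → E →L[ℂ] E) {n : ℕ} (X : Fin n → A) (η : Fin n → E)
    (a : A) (v : E) :
    kernelSum K (Fin.snoc X a : Fin (n + 1) → A) (Fin.snoc η v) =
      kernelSum K X η + ∑ k, inner ℂ (η k) (K (X k) a v) + ∑ l, inner ℂ v (K a (X l) (η l))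
        + inner ℂ v (K a a v) := by
  simp only [kernelSum, Fin.sum_univ_castSucc, Fin.snoc_castSucc, Fin.snoc_last,
    Finset.sum_add_distrib]
  ring

end KernelSum

lemma sum_snoc_one_neg_eq_zero {A E : Type*} [One A] [NormedAddCommGroup E] [NormedSpace ℂ E]
    {ι : A → E →L[ℂ] E} (hι : ∀ Y, ι 1 ∘L ι Y = ι Y) {n : ℕ}
    (X : Fin n → A) (η : Fin n → E) :
    ∑ k, ι ((Fin.snoc X 1 : Fin (n + 1) → A) k)
      ((Fin.snoc η (-∑ k, ι (X k) (η k)) : Fin (n + 1) → E) k) = 0 := by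
  have hfix : ι 1 (∑ k, ι (X k) (η k)) = ∑ k, ι (X k) (η k) := by
    simp only [map_sum, ← comp_apply, hι]
  rw [Fin.sum_univ_castSucc]
  simp only [Fin.snoc_castSucc, Fin.snoc_last, map_neg, hfix, add_neg_cancel]

section Dissipation

variable {A E : Type*} [Ring A] [StarRing A] [Module ℂ A]
  [NormedAddCommGroup E] [InnerProductSpace ℂ E] [CompleteSpace E]

noncomputable def dissipationKernel (ι : A → E →L[ℂ] E) (Λ : A →ₗ[ℂ] E →L[ℂ] E) (X Z : A) :
    E →L[ℂ] E :=
  Λ (star X * Z) - adjoint (ι X) ∘L Λ Z - adjoint (Λ X) ∘L ι Z + adjoint (ι X) ∘L Λ 1 ∘L ι Z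

lemma kernelSum_snoc_one_neg {ι : A → E →L[ℂ] E} {Λ : A →ₗ[ℂ] E →L[ℂ] E}
    (hsym : ∀ X, Λ (star X) = adjoint (Λ X)) {n : ℕ} (X : Fin n → A) (η : Fin n → E) :
    kernelSum (fun X Z => Λ (star X * Z)) (Fin.snoc X 1 : Fin (n + 1) → A)
        (Fin.snoc η (-∑ k, ι (X k) (η k))) =
      kernelSum (dissipationKernel ι Λ) X η := by
  rw [kernelSum_snoc]
  simp only [kernelSum, dissipationKernel, star_one, one_mul, mul_one, hsym,
    inner_neg_left, inner_neg_right, neg_neg, map_sum, map_neg, sum_inner, inner_sum,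
    adjoint_inner_right, sub_apply, add_apply, comp_apply, inner_sub_right, inner_add_right,
    Finset.sum_sub_distrib, Finset.sum_add_distrib, Finset.sum_neg_distrib]
  rw [Finset.sum_comm (f := fun l k => inner ℂ (ι (X k) (η k)) (Λ (X l) (η l))),
    Finset.sum_comm (f := fun l k => inner ℂ (ι (X k) (η k)) (Λ 1 (ι (X l) (η l))))]
  ring

end Dissipation

lemma degenerateRep_one_comp {H : Type*} [NormedAddCommGroup H] [InnerProductSpace ℂ H]
    {d : ℕ}
    {ι : (H →L[ℂ] H) → (PiLp 2 (fun _ : Fin (d + 1) => H) →L[ℂ]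
      PiLp 2 (fun _ : Fin (d + 1) => H))}
    (hι : ∀ (X : H →L[ℂ] H) (v : PiLp 2 (fun _ : Fin (d + 1) => H)),
      ι X v = (WithLp.equiv 2 _).symm
        (fun μ => if μ = 0 then X ((WithLp.equiv 2 _) v 0) else 0))
    (Y : H →L[ℂ] H) : ι 1 ∘L ι Y = ι Y := by
  ext v : 1
  rw [comp_apply, hι 1, hι Y v]
  simp

/-- If `λ : B → B(H ⊗ ℂ^{d+1})` is linear, `♭`-symmetric (`λ(X†) = λ(X)†`) and
conditionally completely positive with respect to the degenerate representation
`ι(X) = X ⊕ 0`, then the dissipation kernel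
`Δ(X,Z) = λ(X†Z) − ι(X)†λ(Z) − λ(X)†ι(Z) + ι(X)†λ(I)ι(Z)` is positive definite. -/
theorem stmt16 {H : Type*} [NormedAddCommGroup H] [InnerProductSpace ℂ H] [CompleteSpace H]
    (d : ℕ)
    (ι : (H →L[ℂ] H) → (PiLp 2 (fun _ : Fin (d + 1) => H) →L[ℂ]
      PiLp 2 (fun _ : Fin (d + 1) => H)))
    (hι : ∀ (X : H →L[ℂ] H) (v : PiLp 2 (fun _ : Fin (d + 1) => H)),
      ι X v = (WithLp.equiv 2 _).symm
        (fun μ => if μ = 0 then X ((WithLp.equiv 2 _) v 0) else 0))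
    (Λ : (H →L[ℂ] H) →ₗ[ℂ] (PiLp 2 (fun _ : Fin (d + 1) => H) →L[ℂ]
      PiLp 2 (fun _ : Fin (d + 1) => H)))
    (hsym : ∀ X, Λ (star X) = adjoint (Λ X))
    (hccp : ∀ (n : ℕ) (X : Fin n → H →L[ℂ] H)
        (η : Fin n → PiLp 2 (fun _ : Fin (d + 1) => H)),
      (∑ k, ι (X k) (η k)) = 0 →
      0 ≤ ∑ k, ∑ l, (inner ℂ (η k) ((Λ (star (X k) * X l)) (η l)) : ℂ)) :
    ∀ (n : ℕ) (X : Fin n → H →L[ℂ] H)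
      (η : Fin n → PiLp 2 (fun _ : Fin (d + 1) => H)),
      0 ≤ ∑ k, ∑ l,
        (inner ℂ (η k)
          ((Λ (star (X k) * X l)
            - (adjoint (ι (X k))) ∘L (Λ (X l))
            - (adjoint (Λ (X k))) ∘L (ι (X l))
            + (adjoint (ι (X k))) ∘L (Λ 1) ∘L (ι (X l))) (η l)) : ℂ) := by
  intro n X η
  calc (0 : ℂ)
      ≤ kernelSum (fun X Z => Λ (star X * Z)) (Fin.snoc X 1 : Fin (n + 1) → _)
          (Fin.snoc η (-∑ k, ι (X k) (η k))) :=
        hccp _ _ _ (sum_snoc_one_neg_eq_zero (degenerateRep_one_comp hι) X η)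
    _ = kernelSum (dissipationKernel ι Λ) X η := kernelSum_snoc_one_neg hsym X η
end
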